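/- arXiv:1504.03138 — 3 statements merged into one kernel-verified Lean document; each statement's English description precedes it below -/
import Mathlib

section
/- Let d ≥ 1, ρ > 0 and p ≥ 1 be such that the half ball B = {z ∈ ℝ^d : ‖z‖ ≤ ρ and z₁ >):0} can be written as a disjoint union of p sets each of diameter at most ρ, and set D = (4√2/3)·p + √(32·p²/9 + 4·p − 1). Then for every finite set ξ ⊂ ℝ^d, Σ_{x ∈ ξ} deg(x)² ≤ (8√2/3 + 4/D)·p·N_ξ^{3/2}. -/
open scoped Classical

/-- Number of edges of the disk graph with radius `ρ` on the finite set `ξ ⊂ ℝ^d`. -/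
noncomputable def diskN {d : ℕ} (ρ : ℝ) (ξ : Finset (EuclideanSpace ℝ (Fin d))) : ℕ :=
  ((ξ.powersetCard 2).filter fun e => ∀ x ∈ e, ∀ y ∈ e, x ≠ y → dist x y ≤ ρ).card

/-- Degree of the vertex `x` in the disk graph with radius `ρ` on the finite set `ξ ⊂ ℝ^d`. -/
noncomputable def diskDeg {d : ℕ} (ρ : ℝ) (ξ : Finset (EuclideanSpace ℝ (Fin d)))
    (x : EuclideanSpace ℝ (Fin d)) : ℕ :=
  (ξ.filter fun y => y ≠ x ∧ dist x y ≤ ρ).card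

/-!
Fix a vertex `x` and pick a direction that is orthogonal to none of the finitely many vectors
`y - x`, `y` a neighbour of `x`; an isometry turns it into the first coordinate axis. Then each
of these vectors or its negative lies in the half ball `B`, so the `p` pieces of `B` split the
neighbourhood of `x` into `2p` cliques. Cauchy–Schwarz over the cliques gives
`deg(x)² ≤ 2p (2e + deg x) ≤ 4p N`, where `e` counts the edges inside the neighbourhood, none of
which contains `x`. Hence `Σ deg² ≤ max deg · Σ deg ≤ √(4pN) · 2N = 4√p N^{3/2}`, and
`4√p ≤ (8√2/3 + 4/D) p` for every `p ≥ 1`.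
-/

open Finset

section AdjPairs

variable {α : Type*} (R : α → α → Prop) (s : Finset α)

noncomputable def adjPairs : Finset (Finset α) :=
  {e ∈ s.powersetCard 2 | ∀ a ∈ e, ∀ b ∈ e, a ≠ b → R a b}

noncomputable def adjNeighbors (x : α) : Finset α :=
  {y ∈ s | y ≠ x ∧ R x y}

variable {R s}

lemma mem_adjPairs {e : Finset α} :
    e ∈ adjPairs R s ↔ (e ⊆ s ∧ #e = 2) ∧ ∀ a ∈ e, ∀ b ∈ e, a ≠ b → R a b := by
  rw [adjPairs, mem_filter, mem_powersetCard]

lemma adjPairs_mono {t : Finset α} (h : s ⊆ t) : adjPairs R s ⊆ adjPairs R t := by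
  intro e he
  rw [mem_adjPairs] at he ⊢
  exact ⟨⟨he.1.1.trans h, he.1.2⟩, he.2⟩

lemma adjPairs_eq_powersetCard (h : ∀ a ∈ s, ∀ b ∈ s, R a b) :
    adjPairs R s = s.powersetCard 2 :=
  filter_true_of_mem fun _ he a ha b hb _ ↦
    h a ((mem_powersetCard.1 he).1 ha) b ((mem_powersetCard.1 he).1 hb)

lemma card_filter_mem_adjPairs (hR : ∀ a b, R a b → R b a) {x : α} (hx : x ∈ s) :
    #{e ∈ adjPairs R s | x ∈ e} = #(adjNeighbors R s x) := by
  symm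
  apply card_bij (fun y _ ↦ {x, y})
  · intro y hy
    obtain ⟨hys, hyx, hxy⟩ := mem_filter.1 hy
    refine mem_filter.2 ⟨mem_adjPairs.2 ⟨⟨?_, card_pair (Ne.symm hyx)⟩, ?_⟩, mem_insert_self _ _⟩
    · exact insert_subset hx (singleton_subset_iff.2 hys)
    · simp only [mem_insert, mem_singleton]
      rintro a (rfl | rfl) b (rfl | rfl) hab <;>
        first | exact absurd rfl hab | exact hxy | exact hR _ _ hxy
  · intro y₁ hy₁ y₂ _ h
    have : y₁ ∈ ({x, y₂} : Finset α) := h ▸ mem_insert_of_mem (mem_singleton_self _)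
    rcases mem_insert.1 this with rfl | h'
    · exact absurd rfl (mem_filter.1 hy₁).2.1
    · exact mem_singleton.1 h'
  · intro e he
    obtain ⟨⟨⟨hes, hcard⟩, hadj⟩, hxe⟩ := by simpa only [mem_filter, mem_adjPairs] using he
    obtain ⟨y, hyx, rfl⟩ : ∃ y, y ≠ x ∧ e = {x, y} := by
      obtain ⟨a, b, hab, rfl⟩ := card_eq_two.1 hcard
      rcases mem_insert.1 hxe with rfl | hb
      · exact ⟨b, Ne.symm hab, rfl⟩
      · rw [mem_singleton.1 hb]; exact ⟨a, hab, pair_comm _ _⟩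
    refine ⟨y, mem_filter.2 ⟨hes (by simp), hyx, ?_⟩, rfl⟩
    exact hadj x (by simp) y (by simp) (Ne.symm hyx)

lemma sum_card_adjNeighbors (hR : ∀ a b, R a b → R b a) :
    ∑ x ∈ s, #(adjNeighbors R s x) = 2 * #(adjPairs R s) := by
  calc ∑ x ∈ s, #(adjNeighbors R s x)
      = ∑ x ∈ s, #{e ∈ adjPairs R s | x ∈ e} :=
        sum_congr rfl fun x hx ↦ (card_filter_mem_adjPairs hR hx).symm
    _ = ∑ e ∈ adjPairs R s, #{x ∈ s | x ∈ e} :=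
        sum_card_bipartiteAbove_eq_sum_card_bipartiteBelow _
    _ = ∑ e ∈ adjPairs R s, 2 := by
        refine sum_congr rfl fun e he ↦ ?_
        obtain ⟨⟨hes, hcard⟩, -⟩ := mem_adjPairs.1 he
        rw [filter_mem_eq_inter, inter_eq_right.2 hes, hcard]
    _ = 2 * #(adjPairs R s) := by rw [sum_const, smul_eq_mul, mul_comm]

lemma card_adjPairs_adjNeighbors_add_card_le (hR : ∀ a b, R a b → R b a) {x : α} (hx : x ∈ s) :
    #(adjPairs R (adjNeighbors R s x)) + #(adjNeighbors R s x) ≤ #(adjPairs R s) := by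
  have hsub : adjPairs R (adjNeighbors R s x) ⊆ {e ∈ adjPairs R s | x ∉ e} := by
    intro e he
    refine mem_filter.2 ⟨adjPairs_mono (filter_subset _ _) he, fun hxe ↦ ?_⟩
    exact (mem_filter.1 ((mem_adjPairs.1 he).1.1 hxe)).2.1 rfl
  calc _ ≤ #{e ∈ adjPairs R s | x ∉ e} + #{e ∈ adjPairs R s | x ∈ e} := by
        rw [card_filter_mem_adjPairs hR hx]; exact Nat.add_le_add_right (card_le_card hsub) _
    _ = #(adjPairs R s) := by rw [add_comm, card_filter_add_card_filter_not]

lemma sum_card_adjPairs_fiber_le {ι : Type*} [Fintype ι] (c : α → ι) :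
    ∑ j, #(adjPairs R {a ∈ s | c a = j}) ≤ #(adjPairs R s) := by
  rw [← card_biUnion]
  · exact card_le_card (biUnion_subset.2 fun j _ ↦ adjPairs_mono (filter_subset _ _))
  · intro j₁ _ j₂ _ hj
    refine disjoint_left.2 fun e he₁ he₂ ↦ ?_
    obtain ⟨a, ha⟩ := card_pos.1 ((mem_adjPairs.1 he₁).1.2 ▸ two_pos)
    exact hj ((mem_filter.1 ((mem_adjPairs.1 he₁).1.1 ha)).2.symm.trans
      (mem_filter.1 ((mem_adjPairs.1 he₂).1.1 ha)).2)

lemma sq_eq_two_mul_choose_two_add (n : ℕ) : n ^ 2 = 2 * n.choose 2 + n := by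
  induction n with
  | zero => rfl
  | succ m ih => rw [Nat.choose_succ_succ, Nat.choose_one_right]; nlinarith

lemma sq_card_le_of_colouring {ι : Type*} [Fintype ι] (c : α → ι)
    (hc : ∀ a ∈ s, ∀ b ∈ s, c a = c b → R a b) :
    #s ^ 2 ≤ Fintype.card ι * (2 * #(adjPairs R s) + #s) := by
  set fiber : ι → Finset α := fun j ↦ {a ∈ s | c a = j}
  have hs : #s = ∑ j, #(fiber j) := card_eq_sum_card_fiberwise fun a _ ↦ mem_univ (c a)
  have hclique : ∀ j, #(adjPairs R (fiber j)) = (#(fiber j)).choose 2 := fun j ↦ by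
    rw [adjPairs_eq_powersetCard, card_powersetCard]
    intro a ha b hb
    exact hc a (mem_filter.1 ha).1 b (mem_filter.1 hb).1
      ((mem_filter.1 ha).2.trans (mem_filter.1 hb).2.symm)
  calc #s ^ 2 ≤ Fintype.card ι * ∑ j, #(fiber j) ^ 2 := hs ▸ sq_sum_le_card_mul_sum_sq
    _ = Fintype.card ι * (2 * ∑ j, #(adjPairs R (fiber j)) + #s) := by
        simp only [sq_eq_two_mul_choose_two_add, hclique, sum_add_distrib, mul_sum, hs]
    _ ≤ Fintype.card ι * (2 * #(adjPairs R s) + #s) := by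
        gcongr; exact sum_card_adjPairs_fiber_le c

lemma sq_card_adjNeighbors_le (hR : ∀ a b, R a b → R b a) {x : α} (hx : x ∈ s) {ι : Type*}
    [Fintype ι] (c : α → ι)
    (hc : ∀ a ∈ adjNeighbors R s x, ∀ b ∈ adjNeighbors R s x, c a = c b → R a b) :
    #(adjNeighbors R s x) ^ 2 ≤ 2 * Fintype.card ι * #(adjPairs R s) := by
  have hle := card_adjPairs_adjNeighbors_add_card_le hR hx
  calc _ ≤ Fintype.card ι * (2 * #(adjPairs R (adjNeighbors R s x)) + #(adjNeighbors R s x)) :=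
        sq_card_le_of_colouring c hc
    _ ≤ Fintype.card ι * (2 * #(adjPairs R s)) := by gcongr; omega
    _ = 2 * Fintype.card ι * #(adjPairs R s) := by ring

end AdjPairs

section Colouring

variable {α ι : Type*} [PseudoMetricSpace α]

def IsDiamColouring (ρ : ℝ) (S : Set α) (c : α → ι) : Prop :=
  ∀ a ∈ S, ∀ b ∈ S, c a = c b → dist a b ≤ ρ

lemma exists_isDiamColouring_of_subset_iUnion [Nonempty ι] {ρ : ℝ} {S : Set α}
    (A : ι → Set α) (hS : S ⊆ ⋃ i, A i) (hbdd : ∀ i, Bornology.IsBounded (A i))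
    (hdiam : ∀ i, Metric.diam (A i) ≤ ρ) : ∃ c : α → ι, IsDiamColouring ρ S c := by
  choose! c hc using fun a (ha : a ∈ S) ↦ Set.mem_iUnion.1 (hS ha)
  refine ⟨c, fun a ha b hb hab ↦ (Metric.dist_le_diam_of_mem (hbdd (c a)) (hc a ha) ?_).trans
    (hdiam _)⟩
  exact hab ▸ hc b hb

lemma IsDiamColouring.comp_isometry {β : Type*} [PseudoMetricSpace β] {ρ : ℝ} {S : Set α}
    {c : α → ι} (hc : IsDiamColouring ρ S c) {f : β → α} (hf : Isometry f) :
    IsDiamColouring ρ (f ⁻¹' S) (c ∘ f) := fun a ha b hb hab ↦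
  hf.dist_eq a b ▸ hc _ ha _ hb hab

end Colouring

open Pointwise in
lemma IsDiamColouring.union_neg {E ι : Type*} [SeminormedAddCommGroup E] {ρ : ℝ} {S : Set E}
    {c : E → ι} (hc : IsDiamColouring ρ S c) :
    IsDiamColouring ρ (S ∪ -S) fun z ↦ if z ∈ S then (c z, true) else (c (-z), false) := by
  intro a ha b hb hab
  by_cases haS : a ∈ S <;> by_cases hbS : b ∈ S <;>
    simp only [haS, hbS, if_true, if_false, Prod.mk.injEq, Bool.true_eq_false,
      Bool.false_eq_true, and_false, and_true] at hab
  · exact hc a haS b hbS hab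
  · rw [← dist_neg_neg]
    exact hc (-a) (ha.resolve_left haS) (-b) (hb.resolve_left hbS) hab

section HalfBall

variable {E : Type*} [NormedAddCommGroup E] [InnerProductSpace ℝ E]

open scoped RealInnerProductSpace

def halfBall (v : E) (ρ : ℝ) : Set E := {z | ‖z‖ ≤ ρ ∧ 0 < ⟪v, z⟫}

lemma exists_inner_ne_zero (W : Finset E) (hW : 0 ∉ W) : ∃ u : E, ∀ w ∈ W, ⟪w, u⟫ ≠ 0 := by
  by_contra! h
  have hcover : ⋃ w : W, ((ℝ ∙ (w : E))ᗮ : Set E) = Set.univ :=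
    Set.eq_univ_of_forall fun u ↦ by
      obtain ⟨w, hw, hwu⟩ := h u
      exact Set.mem_iUnion.2 ⟨⟨w, hw⟩, Submodule.mem_orthogonal_singleton_iff_inner_right.2 hwu⟩
  obtain ⟨w, hw⟩ := Subspace.exists_eq_top_of_iUnion_eq_univ hcover
  rw [Submodule.orthogonal_eq_top_iff, Submodule.span_singleton_eq_bot] at hw
  exact hW (hw ▸ w.2)

lemma exists_linearIsometryEquiv_inner_ne_zero {v : E} (hv : ‖v‖ = 1) (W : Finset E)
    (hW : 0 ∉ W) : ∃ T : E ≃ₗᵢ[ℝ] E, ∀ w ∈ W, ⟪v, T w⟫ ≠ 0 := by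
  obtain ⟨u, hu⟩ := exists_inner_ne_zero W hW
  rcases eq_or_ne u 0 with rfl | hu0
  · exact ⟨.refl ℝ E, fun w hw ↦ absurd (inner_zero_right w) (hu w hw)⟩
  obtain ⟨T, hTu⟩ : ∃ T : E ≃ₗᵢ[ℝ] E, T (‖u‖⁻¹ • u) = v :=
    ⟨_, Submodule.reflection_sub (by simp [norm_smul, hu0, hv])⟩
  refine ⟨T, fun w hw ↦ ?_⟩
  rw [← hTu, LinearIsometryEquiv.inner_map_map, real_inner_smul_left, real_inner_comm]
  exact mul_ne_zero (inv_ne_zero (norm_ne_zero_iff.2 hu0)) (hu w hw)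

lemma mem_halfBall_union_neg {v z : E} {ρ : ℝ} (hz : ‖z‖ ≤ ρ) (hvz : ⟪v, z⟫ ≠ 0) :
    z ∈ halfBall v ρ ∪ -halfBall v ρ := by
  rcases hvz.lt_or_gt with hneg | hpos
  · exact Or.inr ⟨by rwa [norm_neg], by rw [inner_neg_right]; linarith⟩
  · exact Or.inl ⟨hz, hpos⟩

lemma sq_card_adjNeighbors_le_of_halfBall_subset {ι : Type*} [Fintype ι] [Nonempty ι] {v : E}
    (hv : ‖v‖ = 1) {ρ : ℝ} (A : ι → Set E) (hcover : halfBall v ρ ⊆ ⋃ i, A i)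
    (hbdd : ∀ i, Bornology.IsBounded (A i)) (hdiam : ∀ i, Metric.diam (A i) ≤ ρ)
    {s : Finset E} {x : E} (hx : x ∈ s) :
    #(adjNeighbors (fun a b ↦ dist a b ≤ ρ) s x) ^ 2 ≤
      4 * Fintype.card ι * #(adjPairs (fun a b ↦ dist a b ≤ ρ) s) := by
  set nbrs := adjNeighbors (fun a b : E ↦ dist a b ≤ ρ) s x
  have hne : ∀ y ∈ nbrs, y ≠ x := fun y hy ↦ (mem_filter.1 hy).2.1
  obtain ⟨T, hT⟩ := exists_linearIsometryEquiv_inner_ne_zero hv (nbrs.image (· - x)) <| by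
    simpa only [mem_image, sub_eq_zero, not_exists, not_and] using hne
  obtain ⟨c, hc⟩ := exists_isDiamColouring_of_subset_iUnion A hcover hbdd hdiam
  have hT' : Isometry fun y ↦ T (y - x) := T.isometry.comp (IsometryEquiv.subRight x).isometry
  have hmem : ∀ y ∈ nbrs, T (y - x) ∈ halfBall v ρ ∪ -halfBall v ρ := fun y hy ↦
    mem_halfBall_union_neg
      (by rw [T.norm_map, ← dist_eq_norm, dist_comm]; exact (mem_filter.1 hy).2.2)
      (hT _ (mem_image_of_mem _ hy))
  have hc' := hc.union_neg.comp_isometry hT'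
  calc _ ≤ 2 * Fintype.card (ι × Bool) * #(adjPairs (fun a b ↦ dist a b ≤ ρ) s) :=
        sq_card_adjNeighbors_le (fun a b h ↦ dist_comm a b ▸ h) hx _
          fun a ha b hb ↦ hc' a (hmem a ha) b (hmem b hb)
    _ = 4 * Fintype.card ι * #(adjPairs (fun a b ↦ dist a b ≤ ρ) s) := by
        rw [Fintype.card_prod, Fintype.card_bool]; ring

end HalfBall

lemma four_mul_sqrt_le {p : ℝ} (hp : 1 ≤ p) :
    4 * √p ≤ (8 * √2 / 3 + 4 / (4 * √2 / 3 * p + √(32 / 9 * p ^ 2 + 4 * p - 1))) * p := by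
  set D := 4 * √2 / 3 * p + √(32 / 9 * p ^ 2 + 4 * p - 1) with hDdef
  have hsqrt2 : 1.4 ≤ √2 := Real.le_sqrt_of_sq_le (by norm_num)
  have hsqrt2' : √2 ≤ 1.5 := (Real.sqrt_le_left (by norm_num)).2 (by norm_num)
  have hD : 0 < D := by positivity
  have hD' : D ≤ 5 * p := by
    have : √(32 / 9 * p ^ 2 + 4 * p - 1) ≤ 3 * p :=
      (Real.sqrt_le_left (by linarith)).2 (by nlinarith)
    rw [hDdef]; nlinarith
  have hfrac : 4 / 5 ≤ 4 / D * p := by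
    rw [div_mul_eq_mul_div, le_div_iff₀ hD]; linarith
  have hamgm : 4 * √p ≤ 2 + 2 * p := by
    nlinarith [sq_nonneg (√p - 1), Real.sq_sqrt (show 0 ≤ p by linarith)]
  -- `2 + 2p ≤ (8√2/3) p + 4/5` as soon as `p ≥ 1`
  nlinarith

section DiskGraph

variable {d : ℕ} (ρ : ℝ) (ξ : Finset (EuclideanSpace ℝ (Fin d)))

lemma diskDeg_eq_card_adjNeighbors (x : EuclideanSpace ℝ (Fin d)) :
    diskDeg ρ ξ x = #(adjNeighbors (fun a b ↦ dist a b ≤ ρ) ξ x) := by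
  rw [diskDeg, adjNeighbors]; congr

lemma diskN_eq_card_adjPairs : diskN ρ ξ = #(adjPairs (fun a b ↦ dist a b ≤ ρ) ξ) := by
  rw [diskN, adjPairs]; congr

lemma sum_diskDeg : ∑ x ∈ ξ, diskDeg ρ ξ x = 2 * diskN ρ ξ := by
  simp only [diskDeg_eq_card_adjNeighbors, diskN_eq_card_adjPairs]
  exact sum_card_adjNeighbors fun a b h ↦ dist_comm a b ▸ h

lemma sum_sq_diskDeg_le {C : ℝ} (hC : 0 ≤ C)
    (hdeg : ∀ x ∈ ξ, (diskDeg ρ ξ x : ℝ) ^ 2 ≤ C * diskN ρ ξ) :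
    ∑ x ∈ ξ, (diskDeg ρ ξ x : ℝ) ^ 2 ≤ 2 * √C * (diskN ρ ξ : ℝ) ^ ((3 : ℝ) / 2) := by
  set N : ℝ := (diskN ρ ξ : ℝ)
  have hN : N ^ ((3 : ℝ) / 2) = N * √N := by
    rw [show (3 : ℝ) / 2 = 1 + 1 / 2 by norm_num, Real.rpow_add' (by positivity) (by norm_num),
      Real.rpow_one, Real.sqrt_eq_rpow]
  calc ∑ x ∈ ξ, (diskDeg ρ ξ x : ℝ) ^ 2 ≤ ∑ x ∈ ξ, √(C * N) * diskDeg ρ ξ x :=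
        sum_le_sum fun x hx ↦ by
          rw [sq]
          exact mul_le_mul_of_nonneg_right (Real.le_sqrt_of_sq_le (hdeg x hx)) (by positivity)
    _ = √(C * N) * (2 * N) := by
        rw [← mul_sum, ← Nat.cast_sum, sum_diskDeg]; push_cast; rfl
    _ = 2 * √C * N ^ ((3 : ℝ) / 2) := by rw [hN, Real.sqrt_mul hC]; ring

end DiskGraph

theorem sum_sq_degrees_refined_bound_general (d : ℕ) (hd : 0 < d) (ρ : ℝ)
    (p : ℕ) (hp : 1 ≤ p)
    (parts : Fin p → Set (EuclideanSpace ℝ (Fin d)))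
    (hunion : (⋃ i, parts i) =
      {z : EuclideanSpace ℝ (Fin d) | ‖z‖ ≤ ρ ∧ 0 < z ⟨0, hd⟩})
    (hdiam : ∀ i, Metric.diam (parts i) ≤ ρ)
    (D : ℝ)
    (hD : D = 4 * Real.sqrt 2 / 3 * p
        + Real.sqrt (32 / 9 * (p : ℝ) ^ 2 + 4 * (p : ℝ) - 1))
    (ξ : Finset (EuclideanSpace ℝ (Fin d))) :
    ∑ x ∈ ξ, (diskDeg ρ ξ x : ℝ) ^ 2 ≤
      (8 * Real.sqrt 2 / 3 + 4 / D) * p * (diskN ρ ξ : ℝ) ^ ((3 : ℝ) / 2) := by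
  have : Nonempty (Fin p) := Fin.pos_iff_nonempty.1 hp
  have hhalf : halfBall (EuclideanSpace.single ⟨0, hd⟩ 1) ρ = ⋃ i, parts i := by
    rw [hunion]; ext z; simp [halfBall, EuclideanSpace.inner_single_left]
  have hbdd : ∀ i, Bornology.IsBounded (parts i) := fun i ↦
    (Metric.isBounded_closedBall (x := 0) (r := ρ)).subset fun z hz ↦ by
      have := hhalf ▸ Set.mem_iUnion_of_mem i hz
      simpa using this.1
  have hdeg : ∀ x ∈ ξ, (diskDeg ρ ξ x : ℝ) ^ 2 ≤ (4 * p) * diskN ρ ξ := fun x hx ↦ by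
    rw [diskDeg_eq_card_adjNeighbors, diskN_eq_card_adjPairs]
    exact_mod_cast sq_card_adjNeighbors_le_of_halfBall_subset (by simp) parts hhalf.subset hbdd
      hdiam hx |>.trans_eq (by rw [Fintype.card_fin])
  calc _ ≤ 2 * √(4 * p) * (diskN ρ ξ : ℝ) ^ ((3 : ℝ) / 2) :=
        sum_sq_diskDeg_le ρ ξ (by positivity) hdeg
    _ = 4 * √p * (diskN ρ ξ : ℝ) ^ ((3 : ℝ) / 2) := by
        rw [Real.sqrt_mul' _ (Nat.cast_nonneg p), show (4 : ℝ) = 2 ^ 2 by norm_num,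
          Real.sqrt_sq zero_le_two]
        ring
    _ ≤ _ := mul_le_mul_of_nonneg_right (hD ▸ four_mul_sqrt_le (Nat.one_le_cast.2 hp))
        (by positivity)

/-- Theorem 6.4 (i): if the half ball `B = {z : ‖z‖ ≤ ρ, z₁ > 0}` can be partitioned
into `p` sets of diameter at most `ρ`, and
`D = (4√2/3)·p + √(32·p²/9 + 4·p − 1)`, then
`Σ_{x∈ξ} deg(x)² ≤ (8√2/3 + 4/D)·p·N_ξ^(3/2)`. -/
theorem sum_sq_degrees_refined_bound (d : ℕ) (hd : 0 < d) (ρ : ℝ) (hρ : 0 < ρ)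
    (p : ℕ) (hp : 1 ≤ p)
    (parts : Fin p → Set (EuclideanSpace ℝ (Fin d)))
    (hdisj : Pairwise (Function.onFun Disjoint parts))
    (hunion : (⋃ i, parts i) =
      {z : EuclideanSpace ℝ (Fin d) | ‖z‖ ≤ ρ ∧ 0 < z ⟨0, hd⟩})
    (hdiam : ∀ i, Metric.diam (parts i) ≤ ρ)
    (D : ℝ)
    (hD : D = 4 * Real.sqrt 2 / 3 * p
        + Real.sqrt (32 / 9 * (p : ℝ) ^ 2 + 4 * (p : ℝ) - 1))
    (ξ : Finset (EuclideanSpace ℝ (Fin d))) :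
    ∑ x ∈ ξ, (diskDeg ρ ξ x : ℝ) ^ 2 ≤
      (8 * Real.sqrt 2 / 3 + 4 / D) * p * (diskN ρ ξ : ℝ) ^ ((3 : ℝ) / 2) :=
  sum_sq_degrees_refined_bound_general d hd ρ p hp parts hunion hdiam D hD ξ
end

section
/- Let F be a bounded real random variable on a probability space, let a > 0, b ≥ 0 and λ ∈ (0, 2/a). Assume that for every u ∈ (0, λ], Ent(exp(uF)) ≤ (u²/2)·E[(a·F + b)·exp(uF)]. Then log E[exp(λ(F − E F))] ≤ λ²·(a·E F + b)/(2 − a·λ). -/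
open MeasureTheory

/-- Entropy of a (nonnegative) random variable: `Ent(Z) = E[Z log Z] − E[Z] log E[Z]`. -/
noncomputable def Ent {Ω : Type*} [MeasurableSpace Ω] (P : Measure Ω) (Z : Ω → ℝ) : ℝ :=
  (∫ ω, Z ω * Real.log (Z ω) ∂P) - (∫ ω, Z ω ∂P) * Real.log (∫ ω, Z ω ∂P)

/-!
Herbst's argument. For bounded `F` the cumulant generating function `ψ(u) = log E e^{uF}` is
differentiable with `ψ(0) = 0`, `ψ'(0) = E F`, and dividing the entropy hypothesis by `E e^{uF}`
turns it into `u ψ'(u) - ψ(u) ≤ (u²/2)(a ψ'(u) + b)`. For `H(u) = (2 - a u) ψ(u) - 2u E F - b u²`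
this says exactly `u H'(u) ≤ H(u)`, so `H(u)/u` is nonincreasing on `(0, λ]`; it tends to
`H'(0) = 0` as `u → 0⁺`, hence `H(λ) ≤ 0`, which rearranges to the bound.
-/

open Set Filter Topology Real ProbabilityTheory

lemma antitoneOn_div_self_of_mul_deriv_le {H H' : ℝ → ℝ} {lam : ℝ}
    (hH : ∀ u ∈ Ioc 0 lam, HasDerivAt H (H' u) u) (hle : ∀ u ∈ Ioc 0 lam, u * H' u ≤ H u) :
    AntitoneOn (fun u ↦ H u / u) (Ioc 0 lam) := by
  have hderiv : ∀ u ∈ Ioc 0 lam, HasDerivAt (fun u ↦ H u / u) ((H' u * u - H u * 1) / u ^ 2) u :=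
    fun u hu ↦ (hH u hu).div (hasDerivAt_id u) hu.1.ne'
  refine antitoneOn_of_deriv_nonpos (convex_Ioc 0 lam)
    (fun u hu ↦ (hderiv u hu).continuousAt.continuousWithinAt)
    (fun u hu ↦ (hderiv u (interior_subset hu)).differentiableAt.differentiableWithinAt)
    fun u hu ↦ ?_
  have hu := interior_subset hu
  rw [(hderiv u hu).deriv]
  exact div_nonpos_of_nonpos_of_nonneg (by linarith [hle u hu]) (sq_nonneg u)

lemma le_mul_of_hasDerivAt_zero_of_mul_deriv_le {H H' : ℝ → ℝ} {d lam : ℝ} (hlam : 0 < lam)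
    (hH0 : H 0 = 0) (hd : HasDerivAt H d 0)
    (hH : ∀ u ∈ Ioc 0 lam, HasDerivAt H (H' u) u) (hle : ∀ u ∈ Ioc 0 lam, u * H' u ≤ H u) :
    H lam ≤ d * lam := by
  have hslope : Tendsto (fun u ↦ H u / u) (𝓝[>] 0) (𝓝 d) := by
    simpa [hH0, div_eq_inv_mul] using hd.tendsto_slope_zero_right
  have hlam_mem : lam ∈ Ioc 0 lam := ⟨hlam, le_rfl⟩
  have : H lam / lam ≤ d := by
    refine ge_of_tendsto hslope ?_
    filter_upwards [Ioc_mem_nhdsGT hlam] with u hu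
    exact antitoneOn_div_self_of_mul_deriv_le hH hle hu hlam_mem hu.2
  rwa [div_le_iff₀ hlam] at this

theorem herbst_bound {ψ ψ' : ℝ → ℝ} {a b lam : ℝ} (hlam : 0 < lam) (halam : a * lam < 2)
    (hψ : ∀ u ∈ Icc 0 lam, HasDerivAt ψ (ψ' u) u) (hψ0 : ψ 0 = 0)
    (hle : ∀ u ∈ Ioc 0 lam, u * ψ' u - ψ u ≤ u ^ 2 / 2 * (a * ψ' u + b)) :
    ψ lam - lam * ψ' 0 ≤ lam ^ 2 * (a * ψ' 0 + b) / (2 - a * lam) := by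
  set m := ψ' 0
  set H : ℝ → ℝ := fun u ↦ (2 - a * u) * ψ u - 2 * u * m - b * u ^ 2
  set H' : ℝ → ℝ := fun u ↦ -a * ψ u + (2 - a * u) * ψ' u - 2 * m - b * (2 * u)
  have hH : ∀ u ∈ Icc 0 lam, HasDerivAt H (H' u) u := fun u hu ↦ by
    have hlin : HasDerivAt (fun u : ℝ ↦ 2 - a * u) (-a) u := by
      simpa using ((hasDerivAt_id u).const_mul a).const_sub 2
    have h2 : HasDerivAt (fun u : ℝ ↦ 2 * u * m) (2 * m) u := by
      simpa using ((hasDerivAt_id u).const_mul 2).mul_const m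
    exact ((hlin.mul (hψ u hu)).sub h2).sub (by simpa using (hasDerivAt_pow 2 u).const_mul b)
  have hH0 : HasDerivAt H 0 0 := by
    simpa [H', hψ0, m] using hH 0 ⟨le_rfl, hlam.le⟩
  -- `u H' - H` is twice the defect in the assumed inequality.
  have hHle : ∀ u ∈ Ioc 0 lam, u * H' u ≤ H u := fun u hu ↦ by
    nlinarith [hle u hu]
  have := le_mul_of_hasDerivAt_zero_of_mul_deriv_le hlam (by simp [H, hψ0]) hH0
    (fun u hu ↦ hH u (Ioc_subset_Icc_self hu)) hHle
  rw [le_div_iff₀ (by linarith)]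
  nlinarith [this]

section Moments

variable {Ω : Type*} [MeasurableSpace Ω] {μ : Measure Ω} {X : Ω → ℝ} {t : ℝ}

lemma integrableExpSet_eq_univ_of_abs_le [IsFiniteMeasure μ] {M : ℝ} (hX : AEMeasurable X μ)
    (hM : ∀ᵐ ω ∂μ, |X ω| ≤ M) : integrableExpSet X μ = univ :=
  eq_univ_of_forall fun _ ↦ integrable_exp_mul_of_mem_Icc hX (hM.mono fun _ ↦ abs_le.1)

lemma hasDerivAt_cgf [NeZero μ] (h : t ∈ interior (integrableExpSet X μ)) :
    HasDerivAt (cgf X μ) (μ[fun ω ↦ X ω * exp (t * X ω)] / mgf X μ t) t :=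
  (hasDerivAt_mgf h).log (mgf_pos_iff.2 (interior_subset (s := integrableExpSet X μ) h)).ne'

lemma cgf_eq_zero_of_not_aemeasurable (ht : t ≠ 0) (hX : ¬AEMeasurable X μ) : cgf X μ t = 0 :=
  cgf_undef fun h ↦ hX (aemeasurable_of_aemeasurable_exp_mul ht h.aemeasurable)

lemma cgf_sub_const [NeZero μ] (c : ℝ) (h : Integrable (fun ω ↦ exp (t * X ω)) μ) :
    cgf (fun ω ↦ X ω - c) μ t = cgf X μ t - t * c := by
  simp only [cgf, sub_eq_add_neg, mgf_add_const, log_mul (mgf_pos_iff.2 h).ne' (exp_ne_zero _),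
    log_exp, mul_neg]

lemma Ent_exp_mul (X : Ω → ℝ) (t : ℝ) :
    Ent μ (fun ω ↦ exp (t * X ω)) = t * μ[fun ω ↦ X ω * exp (t * X ω)] - mgf X μ t * cgf X μ t := by
  simp only [Ent, log_exp, cgf, mgf]
  rw [← integral_const_mul]
  congr 2 with ω
  ring

lemma mul_deriv_cgf_sub_cgf_le [NeZero μ] {a b : ℝ} (h : t ∈ interior (integrableExpSet X μ))
    (hEnt : Ent μ (fun ω ↦ exp (t * X ω)) ≤ t ^ 2 / 2 * ∫ ω, (a * X ω + b) * exp (t * X ω) ∂μ) :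
    t * (μ[fun ω ↦ X ω * exp (t * X ω)] / mgf X μ t) - cgf X μ t ≤
      t ^ 2 / 2 * (a * (μ[fun ω ↦ X ω * exp (t * X ω)] / mgf X μ t) + b) := by
  have hexp : Integrable (fun ω ↦ exp (t * X ω)) μ := interior_subset (s := integrableExpSet X μ) h
  have hmul : Integrable (fun ω ↦ X ω * exp (t * X ω)) μ := by
    simpa using integrable_pow_mul_exp_of_mem_interior_integrableExpSet h 1
  have hlin : ∫ ω, (a * X ω + b) * exp (t * X ω) ∂μ =
      a * μ[fun ω ↦ X ω * exp (t * X ω)] + b * mgf X μ t := by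
    simp only [add_mul, mul_assoc]
    rw [integral_add (hmul.const_mul a) (hexp.const_mul b), integral_const_mul, integral_const_mul,
      mgf]
  rw [Ent_exp_mul, hlin] at hEnt
  have hpos : 0 < mgf X μ t := mgf_pos_iff.2 hexp
  rw [← sub_nonneg] at hEnt ⊢
  set e := μ[fun ω ↦ X ω * exp (t * X ω)]
  set m := mgf X μ t
  have hdiv : t ^ 2 / 2 * (a * (e / m) + b) - (t * (e / m) - cgf X μ t) =
      (t ^ 2 / 2 * (a * e + b * m) - (t * e - m * cgf X μ t)) / m := by
    field_simp
  rw [hdiv]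
  exact div_nonneg hEnt hpos.le

end Moments

/-- The bounded case of Theorem 3.9: if `F` is bounded, `a > 0`, `b ≥ 0`,
`λ ∈ (0, 2/a)` and `Ent(e^{uF}) ≤ (u²/2)·E[(aF + b)e^{uF}]` for all `u ∈ (0, λ]`,
then `log E[e^{λ(F − EF)}] ≤ λ²(a·EF + b)/(2 − aλ)`. -/
theorem self_bounding_mgf_bound {Ω : Type*} [MeasurableSpace Ω]
    (P : Measure Ω) [IsProbabilityMeasure P]
    (F : Ω → ℝ) (hFbdd : ∃ M : ℝ, ∀ ω, |F ω| ≤ M)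
    (a b lam : ℝ) (ha : 0 < a) (hb : 0 ≤ b) (hlam0 : 0 < lam) (hlam : lam < 2 / a)
    (hEnt : ∀ u : ℝ, 0 < u → u ≤ lam →
      Ent P (fun ω => Real.exp (u * F ω)) ≤
        u ^ 2 / 2 * ∫ ω, (a * F ω + b) * Real.exp (u * F ω) ∂P) :
    Real.log (∫ ω, Real.exp (lam * (F ω - ∫ ω', F ω' ∂P)) ∂P) ≤
      lam ^ 2 * (a * (∫ ω', F ω' ∂P) + b) / (2 - a * lam) := by
  have halam : a * lam < 2 := by rwa [lt_div_iff₀ ha, mul_comm] at hlam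
  change cgf (fun ω ↦ F ω - ∫ ω', F ω' ∂P) P lam ≤ _
  obtain ⟨M, hM⟩ := hFbdd
  by_cases hF : AEMeasurable F P
  swap
  · -- A non-measurable `F` makes every integral in the statement vanish.
    have hF' : ¬AEMeasurable (fun ω ↦ F ω - ∫ ω', F ω' ∂P) P := fun h ↦
      hF (by simpa using h.add_const (∫ ω', F ω' ∂P))
    rw [cgf_eq_zero_of_not_aemeasurable hlam0.ne' hF',
      integral_undef fun h ↦ hF h.aemeasurable]
    exact div_nonneg (by positivity) (by linarith)
  have hmem : ∀ u, u ∈ interior (integrableExpSet F P) := by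
    simp [integrableExpSet_eq_univ_of_abs_le hF (ae_of_all _ hM)]
  have hmean : P[fun ω ↦ F ω * exp (0 * F ω)] / mgf F P 0 = ∫ ω', F ω' ∂P := by simp
  rw [cgf_sub_const _ (interior_subset (s := integrableExpSet F P) (hmem lam)), ← hmean]
  exact herbst_bound hlam0 halam (fun u _ ↦ hasDerivAt_cgf (hmem u)) cgf_zero
    fun u hu ↦ mul_deriv_cgf_sub_cgf_le (hmem u) (hEnt u hu.1 hu.2)
end

section
/- Let X be a set, ξ : X → ℕ finitely supported, and A a nonempty set of finitely supported functions X → ℕ. Then Σ_{z ∈ supp ξ} ξ(z)·(d_T(ξ, A)² − d_T(ξ − δ_z, A)²)² ≤ 4·d_T(ξ, A)². -/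
/-!
`d_T(ξ, A)²` is the minimum of `Σ_x m(x)² / ξ(x)` over the convex hull of the deficit vectors
`(ξ − ν)₊`, `ν ∈ A`; these form a finite set, so the minimum is attained at some `m`, and
`u = m / (ξ · d_T)` is then an optimal dual vector. Removing one point at `z` moves `d_T²` by at
most `2 m(z) / ξ(z)` in either direction: `u` stays feasible for `ξ − δ_z` and loses at most
`u(z)` against every `ν`, while the same convex combination of deficits of `ξ − δ_z` agrees with
`m` off `z` and is at most `min (m(z), ξ(z) − 1)` at `z`. Finally
`Σ_z ξ(z) (2 m(z) / ξ(z))² = 4 Σ_z m(z)² / ξ(z) = 4 d_T²`.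
-/

/-- The convex distance of a finite point configuration `ξ` (a finitely supported
function `X → ℕ`) to a set `A` of configurations:
`d_T(ξ, A) = sup_{‖u‖_ξ ≤ 1} inf_{ν ∈ A} Σ_{x ∈ supp ξ} u(x)·(ξ(x) − ν(x))₊`. -/
noncomputable def convexDist {X : Type*} (ξ : X →₀ ℕ) (A : Set (X →₀ ℕ)) : ℝ :=
  sSup {r : ℝ | ∃ u : X → ℝ,
    (∑ x ∈ ξ.support, (ξ x : ℝ) * u x ^ 2) ≤ 1 ∧
    r = sInf {s : ℝ | ∃ ν ∈ A,
      s = ∑ x ∈ ξ.support, u x * max ((ξ x : ℝ) - (ν x : ℝ)) 0}}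

open Finset Filter Topology

namespace ConvexDist

variable {X : Type*}

noncomputable def deficit (ζ ν : X →₀ ℕ) : X → ℝ := fun x => max ((ζ x : ℝ) - ν x) 0

noncomputable def weightedSqNorm (ζ : X →₀ ℕ) (m : X → ℝ) : ℝ :=
  ∑ x ∈ ζ.support, m x ^ 2 / ζ x

noncomputable def deficitInf (ζ : X →₀ ℕ) (A : Set (X →₀ ℕ)) (u : X → ℝ) : ℝ :=
  sInf {s : ℝ | ∃ ν ∈ A, s = ∑ x ∈ ζ.support, u x * deficit ζ ν x}

theorem convexDist_eq_sSup (ζ : X →₀ ℕ) (A : Set (X →₀ ℕ)) :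
    convexDist ζ A = sSup {r : ℝ | ∃ u : X → ℝ,
      ∑ x ∈ ζ.support, (ζ x : ℝ) * u x ^ 2 ≤ 1 ∧ r = deficitInf ζ A u} :=
  rfl

theorem natCast_apply_pos_of_mem_support {ζ : X →₀ ℕ} {x : X} (hx : x ∈ ζ.support) :
    (0 : ℝ) < ζ x :=
  Nat.cast_pos.2 (Nat.pos_of_ne_zero (Finsupp.mem_support_iff.1 hx))

section Deficit

variable (ζ ν : X →₀ ℕ)

theorem deficit_eq_natCast_tsub : deficit ζ ν = fun x => (((ζ - ν) x : ℕ) : ℝ) := by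
  funext x
  rcases le_total (ζ x) (ν x) with h | h
  · simp [deficit, Nat.sub_eq_zero_of_le h, h]
  · simp [deficit, Nat.cast_sub h, h]

theorem deficit_nonneg (x : X) : 0 ≤ deficit ζ ν x := le_max_right _ _

theorem deficit_le (x : X) : deficit ζ ν x ≤ ζ x := max_le (by simp) (Nat.cast_nonneg _)

theorem deficit_eq_zero {x : X} (hx : x ∉ ζ.support) : deficit ζ ν x = 0 := by
  simp [deficit, Finsupp.notMem_support_iff.1 hx]

theorem deficit_le_deficit_tsub_add (η : X →₀ ℕ) (x : X) :
    deficit ζ ν x ≤ deficit (ζ - η) ν x + η x := by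
  rw [deficit_eq_natCast_tsub, deficit_eq_natCast_tsub]
  simp only [Finsupp.tsub_apply]
  exact_mod_cast (by omega : ζ x - ν x ≤ ζ x - η x - ν x + η x)

variable {ζ ν} in
theorem deficit_mono {ξ : X →₀ ℕ} {x : X} (h : ζ x ≤ ξ x) : deficit ζ ν x ≤ deficit ξ ν x :=
  max_le_max (sub_le_sub_right (Nat.cast_le.2 h) _) le_rfl

theorem finite_deficit_image (A : Set (X →₀ ℕ)) : (deficit ζ '' A).Finite := by
  classical
  refine ((Set.finite_Iic ζ).image fun μ x => (μ x : ℝ)).subset ?_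
  rintro _ ⟨ν, -, rfl⟩
  exact ⟨ζ - ν, Set.mem_Iic.2 tsub_le_self, (deficit_eq_natCast_tsub ζ ν).symm⟩

end Deficit

variable {ζ : X →₀ ℕ} {A : Set (X →₀ ℕ)} {u m : X → ℝ}

theorem mem_Icc_of_mem_convexHull_deficit (hm : m ∈ convexHull ℝ (deficit ζ '' A)) (x : X) :
    m x ∈ Set.Icc 0 (ζ x : ℝ) := by
  have hbox : convexHull ℝ (deficit ζ '' A) ⊆ Set.univ.pi fun x => Set.Icc 0 (ζ x : ℝ) :=
    convexHull_min (by rintro _ ⟨ν, -, rfl⟩ x -; exact ⟨deficit_nonneg .., deficit_le ..⟩)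
      (convex_pi fun x _ => convex_Icc _ _)
  exact hbox hm x (Set.mem_univ x)

theorem deficitInf_le {ν : X →₀ ℕ} (hν : ν ∈ A) :
    deficitInf ζ A u ≤ ∑ x ∈ ζ.support, u x * deficit ζ ν x := by
  refine csInf_le ?_ ⟨ν, hν, rfl⟩
  refine ((finite_deficit_image ζ A).image fun w => ∑ x ∈ ζ.support, u x * w x).bddBelow.mono ?_
  rintro _ ⟨ν, hν, rfl⟩
  exact ⟨_, ⟨ν, hν, rfl⟩, rfl⟩

theorem le_deficitInf (hA : A.Nonempty) {c : ℝ}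
    (h : ∀ ν ∈ A, c ≤ ∑ x ∈ ζ.support, u x * deficit ζ ν x) : c ≤ deficitInf ζ A u :=
  le_csInf (hA.elim fun ν hν => ⟨_, ν, hν, rfl⟩) (by rintro _ ⟨ν, hν, rfl⟩; exact h ν hν)

theorem deficitInf_le_of_mem_convexHull (hm : m ∈ convexHull ℝ (deficit ζ '' A)) :
    deficitInf ζ A u ≤ ∑ x ∈ ζ.support, u x * m x := by
  have hlin : IsLinearMap ℝ fun w : X → ℝ => ∑ x ∈ ζ.support, u x * w x :=
    ⟨fun v w => by simp only [Pi.add_apply, mul_add, sum_add_distrib],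
      fun c w => by simp only [Pi.smul_apply, smul_eq_mul, mul_sum, mul_left_comm]⟩
  refine convexHull_min ?_ (convex_halfSpace_ge hlin (deficitInf ζ A u)) hm
  rintro _ ⟨ν, hν, rfl⟩
  exact deficitInf_le hν

theorem weightedSqNorm_nonneg (ζ : X →₀ ℕ) (m : X → ℝ) : 0 ≤ weightedSqNorm ζ m :=
  sum_nonneg fun _ _ => by positivity

theorem sum_mul_le_sqrt_weightedSqNorm (hu : ∑ x ∈ ζ.support, (ζ x : ℝ) * u x ^ 2 ≤ 1)
    (m : X → ℝ) : ∑ x ∈ ζ.support, u x * m x ≤ √(weightedSqNorm ζ m) := by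
  have hsqrt : ∀ x ∈ ζ.support, (0 : ℝ) < √(ζ x) := fun x hx =>
    Real.sqrt_pos.2 (natCast_apply_pos_of_mem_support hx)
  calc ∑ x ∈ ζ.support, u x * m x
      = ∑ x ∈ ζ.support, (√(ζ x) * u x) * (m x / √(ζ x)) :=
        sum_congr rfl fun x hx => by field_simp [(hsqrt x hx).ne']
    _ ≤ √(∑ x ∈ ζ.support, (√(ζ x) * u x) ^ 2) *
          √(∑ x ∈ ζ.support, (m x / √(ζ x)) ^ 2) :=
        Real.sum_mul_le_sqrt_mul_sqrt _ _ _
    _ = √(∑ x ∈ ζ.support, (ζ x : ℝ) * u x ^ 2) * √(weightedSqNorm ζ m) := by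
        simp only [mul_pow, div_pow, Real.sq_sqrt (Nat.cast_nonneg _), weightedSqNorm]
    _ ≤ √(weightedSqNorm ζ m) :=
        mul_le_of_le_one_left (Real.sqrt_nonneg _) (Real.sqrt_le_one.2 hu)

theorem convexDist_le_sqrt_weightedSqNorm (hm : m ∈ convexHull ℝ (deficit ζ '' A)) :
    convexDist ζ A ≤ √(weightedSqNorm ζ m) := by
  rw [convexDist_eq_sSup]
  refine csSup_le ⟨_, 0, by simp, rfl⟩ ?_
  rintro _ ⟨u, hu, rfl⟩
  exact (deficitInf_le_of_mem_convexHull hm).trans (sum_mul_le_sqrt_weightedSqNorm hu m)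

theorem le_convexDist (hA : A.Nonempty) (hu : ∑ x ∈ ζ.support, (ζ x : ℝ) * u x ^ 2 ≤ 1)
    {c : ℝ} (h : ∀ ν ∈ A, c ≤ ∑ x ∈ ζ.support, u x * deficit ζ ν x) :
    c ≤ convexDist ζ A := by
  obtain ⟨ν, hν⟩ := hA
  have hbdd : BddAbove {r : ℝ | ∃ u : X → ℝ,
      ∑ x ∈ ζ.support, (ζ x : ℝ) * u x ^ 2 ≤ 1 ∧ r = deficitInf ζ A u} := by
    refine ⟨√(weightedSqNorm ζ (deficit ζ ν)), ?_⟩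
    rintro _ ⟨u, hu, rfl⟩
    exact (deficitInf_le hν).trans (sum_mul_le_sqrt_weightedSqNorm hu _)
  exact (le_deficitInf ⟨ν, hν⟩ h).trans (le_csSup hbdd ⟨u, hu, rfl⟩)

theorem convexDist_nonneg (hA : A.Nonempty) : 0 ≤ convexDist ζ A :=
  le_convexDist (u := 0) hA (by simp) fun _ _ => by simp

theorem exists_isMinOn_weightedSqNorm (hA : A.Nonempty) (ζ : X →₀ ℕ) :
    ∃ m ∈ convexHull ℝ (deficit ζ '' A),
      IsMinOn (weightedSqNorm ζ) (convexHull ℝ (deficit ζ '' A)) m :=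
  ((finite_deficit_image ζ A).isCompact_convexHull ℝ).exists_isMinOn
    (hA.image _).convexHull (by unfold weightedSqNorm; fun_prop : Continuous _).continuousOn

theorem nonneg_of_forall_nonneg_add_mul {a b : ℝ}
    (h : ∀ t ∈ Set.Ioo (0 : ℝ) 1, 0 ≤ a + t * b) : 0 ≤ a := by
  have hlim : Tendsto (fun t : ℝ => a + t * b) (𝓝[>] 0) (𝓝 a) := by
    have : Continuous fun t : ℝ => a + t * b := by fun_prop
    simpa using (this.tendsto 0).mono_left nhdsWithin_le_nhds
  exact ge_of_tendsto hlim (eventually_of_mem (Ioo_mem_nhdsGT one_pos) h)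

theorem weightedSqNorm_le_sum_mul_div_of_isMinOn {K : Set (X → ℝ)} (hK : Convex ℝ K)
    (hm : m ∈ K) (hmin : IsMinOn (weightedSqNorm ζ) K m) {w : X → ℝ} (hw : w ∈ K) :
    weightedSqNorm ζ m ≤ ∑ x ∈ ζ.support, m x * w x / ζ x := by
  set a := ∑ x ∈ ζ.support, m x * (w x - m x) / ζ x
  have hexpand : ∀ t : ℝ, weightedSqNorm ζ (m + t • (w - m)) =
      weightedSqNorm ζ m + t * (2 * a + t * weightedSqNorm ζ (w - m)) := by
    intro t
    simp only [weightedSqNorm, a, mul_add, mul_sum, ← sum_add_distrib]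
    refine sum_congr rfl fun x _ => ?_
    simp only [Pi.add_apply, Pi.smul_apply, Pi.sub_apply, smul_eq_mul]
    ring
  have ha : 0 ≤ 2 * a := by
    refine nonneg_of_forall_nonneg_add_mul (b := weightedSqNorm ζ (w - m)) fun t ht => ?_
    have : weightedSqNorm ζ m ≤ weightedSqNorm ζ (m + t • (w - m)) :=
      hmin (hK.add_smul_sub_mem hm hw ⟨ht.1.le, ht.2.le⟩)
    rw [hexpand] at this
    exact nonneg_of_mul_nonneg_right (by linarith) ht.1
  have : a = ∑ x ∈ ζ.support, m x * w x / ζ x - weightedSqNorm ζ m := by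
    simp only [a, weightedSqNorm, ← sum_sub_distrib, mul_sub, sub_div, sq]
  linarith

noncomputable def dualWitness (ζ : X →₀ ℕ) (m : X → ℝ) : X → ℝ :=
  fun x => m x / (ζ x * √(weightedSqNorm ζ m))

theorem sum_mul_dualWitness_sq (hpos : 0 < weightedSqNorm ζ m) :
    ∑ x ∈ ζ.support, (ζ x : ℝ) * dualWitness ζ m x ^ 2 = 1 := by
  have : ∑ x ∈ ζ.support, (ζ x : ℝ) * dualWitness ζ m x ^ 2 =
      (∑ x ∈ ζ.support, m x ^ 2 / ζ x) / √(weightedSqNorm ζ m) ^ 2 := by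
    rw [sum_div]
    refine sum_congr rfl fun x hx => ?_
    have := natCast_apply_pos_of_mem_support hx
    simp only [dualWitness]
    field_simp
  rw [this, Real.sq_sqrt hpos.le]
  exact div_self hpos.ne'

theorem sqrt_weightedSqNorm_le_sum_dualWitness_mul (hm : m ∈ convexHull ℝ (deficit ζ '' A))
    (hmin : IsMinOn (weightedSqNorm ζ) (convexHull ℝ (deficit ζ '' A)) m)
    (hpos : 0 < weightedSqNorm ζ m) {ν : X →₀ ℕ} (hν : ν ∈ A) :
    √(weightedSqNorm ζ m) ≤ ∑ x ∈ ζ.support, dualWitness ζ m x * deficit ζ ν x := by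
  have hsqrt : 0 < √(weightedSqNorm ζ m) := Real.sqrt_pos.2 hpos
  have : ∑ x ∈ ζ.support, dualWitness ζ m x * deficit ζ ν x =
      (∑ x ∈ ζ.support, m x * deficit ζ ν x / ζ x) / √(weightedSqNorm ζ m) := by
    rw [sum_div]
    refine sum_congr rfl fun x hx => ?_
    have := natCast_apply_pos_of_mem_support hx
    simp only [dualWitness]
    field_simp
  rw [this, le_div_iff₀ hsqrt, Real.mul_self_sqrt hpos.le]
  exact weightedSqNorm_le_sum_mul_div_of_isMinOn (convex_convexHull ℝ _) hm hmin
    (subset_convexHull ℝ _ ⟨ν, hν, rfl⟩)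

theorem convexDist_eq_sqrt_weightedSqNorm (hA : A.Nonempty)
    (hm : m ∈ convexHull ℝ (deficit ζ '' A))
    (hmin : IsMinOn (weightedSqNorm ζ) (convexHull ℝ (deficit ζ '' A)) m) :
    convexDist ζ A = √(weightedSqNorm ζ m) := by
  refine le_antisymm (convexDist_le_sqrt_weightedSqNorm hm) ?_
  rcases (weightedSqNorm_nonneg ζ m).eq_or_lt with h0 | hpos
  · rw [← h0, Real.sqrt_zero]
    exact convexDist_nonneg hA
  · exact le_convexDist hA (sum_mul_dualWitness_sq hpos).le fun ν hν =>
      sqrt_weightedSqNorm_le_sum_dualWitness_mul hm hmin hpos hν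

theorem sq_convexDist_eq_weightedSqNorm (hA : A.Nonempty)
    (hm : m ∈ convexHull ℝ (deficit ζ '' A))
    (hmin : IsMinOn (weightedSqNorm ζ) (convexHull ℝ (deficit ζ '' A)) m) :
    convexDist ζ A ^ 2 = weightedSqNorm ζ m := by
  rw [convexDist_eq_sqrt_weightedSqNorm hA hm hmin, Real.sq_sqrt (weightedSqNorm_nonneg ζ m)]

theorem sum_mul_sq_le_of_le {ξ : X →₀ ℕ} (h : ζ ≤ ξ) (u : X → ℝ) :
    ∑ x ∈ ζ.support, (ζ x : ℝ) * u x ^ 2 ≤ ∑ x ∈ ξ.support, (ξ x : ℝ) * u x ^ 2 := by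
  rw [sum_subset (Finsupp.support_mono h) fun x _ hx => by
    simp [Finsupp.notMem_support_iff.1 hx]]
  exact sum_le_sum fun x _ => mul_le_mul_of_nonneg_right (by exact_mod_cast h x) (sq_nonneg _)

theorem sum_mul_deficit_le_sum_mul_deficit_tsub_single {ξ ν : X →₀ ℕ} {z : X}
    (hu : ∀ x ∈ ξ.support, 0 ≤ u x) (hz : z ∈ ξ.support) :
    ∑ x ∈ ξ.support, u x * deficit ξ ν x ≤
      ∑ x ∈ (ξ - Finsupp.single z 1).support, u x * deficit (ξ - Finsupp.single z 1) ν x +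
        u z := by
  classical
  rw [sum_subset Finsupp.support_tsub fun x _ hx => by rw [deficit_eq_zero _ _ hx, mul_zero]]
  calc ∑ x ∈ ξ.support, u x * deficit ξ ν x
      ≤ ∑ x ∈ ξ.support, (u x * deficit (ξ - Finsupp.single z 1) ν x +
          u x * (Finsupp.single z 1 x : ℕ)) :=
        sum_le_sum fun x hx => by
          rw [← mul_add]
          exact mul_le_mul_of_nonneg_left (deficit_le_deficit_tsub_add ..) (hu x hx)
    _ = _ := by simp [sum_add_distrib, Finsupp.single_apply, hz]

theorem exists_mem_convexHull_deficit_of_le {ξ : X →₀ ℕ} (hζ : ζ ≤ ξ)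
    (hm : m ∈ convexHull ℝ (deficit ξ '' A)) :
    ∃ m' ∈ convexHull ℝ (deficit ζ '' A), m' ≤ m ∧ ∀ x, ζ x = ξ x → m' x = m x := by
  refine convexHull_min (t := {w | ∃ w' ∈ convexHull ℝ (deficit ζ '' A),
    w' ≤ w ∧ ∀ x, ζ x = ξ x → w' x = w x}) ?_ ?_ hm
  · rintro _ ⟨ν, hν, rfl⟩
    exact ⟨deficit ζ ν, subset_convexHull ℝ _ ⟨ν, hν, rfl⟩, fun x => deficit_mono (hζ x),
      fun x hx => by simp only [deficit, hx]⟩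
  · rintro w₁ ⟨w₁', h₁, hle₁, heq₁⟩ w₂ ⟨w₂', h₂, hle₂, heq₂⟩ a b ha hb hab
    refine ⟨a • w₁' + b • w₂', convex_convexHull ℝ _ h₁ h₂ ha hb hab,
      add_le_add (smul_le_smul_of_nonneg_left hle₁ ha) (smul_le_smul_of_nonneg_left hle₂ hb),
      fun x hx => ?_⟩
    simp [heq₁ x hx, heq₂ x hx]

-- At `n = 0` the first term is the junk value `a ^ 2 / 0 = 0`.
theorem sq_div_sub_sq_div_add_one_le {a b n : ℝ} (ha : 0 ≤ a) (hab : a ≤ b) (han : a ≤ n) :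
    a ^ 2 / n - b ^ 2 / (n + 1) ≤ 2 * b / (n + 1) := by
  rcases (ha.trans han).eq_or_lt with rfl | hn
  · obtain rfl : a = 0 := le_antisymm han ha
    simp only [ne_eq, OfNat.ofNat_ne_zero, not_false_eq_true, zero_pow, div_zero, zero_add,
      div_one, zero_sub]
    nlinarith
  · rw [sub_le_iff_le_add, ← add_div, div_le_div_iff₀ hn (by positivity)]
    have hsq : a ^ 2 ≤ b ^ 2 := pow_le_pow_left₀ ha hab 2
    nlinarith [mul_le_mul_of_nonneg_left han ha, mul_le_mul_of_nonneg_right hab hn.le,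
      mul_le_mul_of_nonneg_right hsq hn.le]

variable {ξ : X →₀ ℕ} {z : X}

theorem sq_convexDist_sub_sq_convexDist_tsub_single_le (hA : A.Nonempty)
    (hm : m ∈ convexHull ℝ (deficit ξ '' A))
    (hmin : IsMinOn (weightedSqNorm ξ) (convexHull ℝ (deficit ξ '' A)) m)
    (hz : z ∈ ξ.support) :
    convexDist ξ A ^ 2 - convexDist (ξ - Finsupp.single z 1) A ^ 2 ≤ 2 * m z / ξ z := by
  set d := convexDist ξ A
  set d' := convexDist (ξ - Finsupp.single z 1) A
  have hd' : 0 ≤ d' := convexDist_nonneg hA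
  have hmz : 0 ≤ m z := (mem_Icc_of_mem_convexHull_deficit hm z).1
  have hξz := natCast_apply_pos_of_mem_support hz
  rcases le_or_gt d d' with hle | hlt
  · have : d ^ 2 ≤ d' ^ 2 := pow_le_pow_left₀ (convexDist_nonneg hA) hle 2
    have : 0 ≤ 2 * m z / ξ z := by positivity
    linarith
  have hd : d = √(weightedSqNorm ξ m) := convexDist_eq_sqrt_weightedSqNorm hA hm hmin
  have hdpos : 0 < d := hd'.trans_lt hlt
  have hpos : 0 < weightedSqNorm ξ m := Real.sqrt_pos.1 (hd ▸ hdpos)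
  set u := dualWitness ξ m
  have hu : ∀ x ∈ ξ.support, 0 ≤ u x := fun x _ =>
    div_nonneg (mem_Icc_of_mem_convexHull_deficit hm x).1 (by positivity)
  have hgap : d - u z ≤ d' := by
    refine le_convexDist hA ((sum_mul_sq_le_of_le tsub_le_self u).trans
      (sum_mul_dualWitness_sq hpos).le) fun ν hν => ?_
    have := (hd ▸ sqrt_weightedSqNorm_le_sum_dualWitness_mul hm hmin hpos hν).trans
      (sum_mul_deficit_le_sum_mul_deficit_tsub_single (ν := ν) hu hz)
    linarith
  have huz : u z * (2 * d) = 2 * m z / ξ z := by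
    simp only [u, dualWitness, ← hd]
    field_simp
  nlinarith

theorem sq_convexDist_tsub_single_sub_sq_convexDist_le (hA : A.Nonempty)
    (hm : m ∈ convexHull ℝ (deficit ξ '' A))
    (hmin : IsMinOn (weightedSqNorm ξ) (convexHull ℝ (deficit ξ '' A)) m)
    (hz : z ∈ ξ.support) :
    convexDist (ξ - Finsupp.single z 1) A ^ 2 - convexDist ξ A ^ 2 ≤ 2 * m z / ξ z := by
  classical
  set ξ' := ξ - Finsupp.single z 1
  obtain ⟨m', hm', hle, heq⟩ := exists_mem_convexHull_deficit_of_le (tsub_le_self : ξ' ≤ ξ) hm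
  have hd' : convexDist ξ' A ^ 2 ≤ weightedSqNorm ξ' m' :=
    (Real.le_sqrt (convexDist_nonneg hA) (weightedSqNorm_nonneg _ _)).1
      (convexDist_le_sqrt_weightedSqNorm hm')
  have hd := sq_convexDist_eq_weightedSqNorm hA hm hmin
  have hξz : (ξ z : ℝ) = ξ' z + 1 := by
    have : 1 ≤ ξ z := Nat.one_le_iff_ne_zero.2 (Finsupp.mem_support_iff.1 hz)
    simp [ξ', Nat.cast_sub this]
  have herase : ∑ x ∈ ξ.support.erase z, m' x ^ 2 / ξ' x =
      ∑ x ∈ ξ.support.erase z, m x ^ 2 / ξ x := by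
    refine sum_congr rfl fun x hx => ?_
    have hx : ξ' x = ξ x := by simp [ξ', ne_of_mem_erase hx]
    rw [hx, heq x hx]
  have hsplit : weightedSqNorm ξ' m' - weightedSqNorm ξ m =
      m' z ^ 2 / ξ' z - m z ^ 2 / ξ z := by
    have hx : ∀ x ∉ ξ'.support, m' x ^ 2 / ξ' x = 0 := fun x hx => by
      rw [Finsupp.notMem_support_iff.1 hx, Nat.cast_zero, div_zero]
    rw [weightedSqNorm, sum_subset Finsupp.support_tsub fun x _ => hx x, weightedSqNorm,
      ← add_sum_erase _ _ hz, ← add_sum_erase _ _ hz, herase]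
    ring
  have := sq_div_sub_sq_div_add_one_le (mem_Icc_of_mem_convexHull_deficit hm' z).1 (hle z)
    (mem_Icc_of_mem_convexHull_deficit hm' z).2
  rw [← hξz] at this
  linarith

end ConvexDist

open ConvexDist

/-- Relation (8.3): the remove-one-point differences of the squared convex distance
satisfy `Σ_{z ∈ supp ξ} ξ(z)·(d_T(ξ,A)² − d_T(ξ − δ_z, A)²)² ≤ 4·d_T(ξ,A)²`. -/
theorem convexDist_sq_remove_one_sq_sum_le {X : Type*} (ξ : X →₀ ℕ)
    (A : Set (X →₀ ℕ)) (hA : A.Nonempty) :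
    ∑ z ∈ ξ.support,
      (ξ z : ℝ) *
        (convexDist ξ A ^ 2 - convexDist (ξ - Finsupp.single z 1) A ^ 2) ^ 2 ≤
      4 * convexDist ξ A ^ 2 := by
  obtain ⟨m, hm, hmin⟩ := exists_isMinOn_weightedSqNorm hA ξ
  have hd := sq_convexDist_eq_weightedSqNorm hA hm hmin
  calc ∑ z ∈ ξ.support, (ξ z : ℝ) *
        (convexDist ξ A ^ 2 - convexDist (ξ - Finsupp.single z 1) A ^ 2) ^ 2
      ≤ ∑ z ∈ ξ.support, (ξ z : ℝ) * (2 * m z / ξ z) ^ 2 :=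
        sum_le_sum fun z hz => mul_le_mul_of_nonneg_left (sq_le_sq'
          (by linarith [sq_convexDist_tsub_single_sub_sq_convexDist_le hA hm hmin hz])
          (sq_convexDist_sub_sq_convexDist_tsub_single_le hA hm hmin hz)) (Nat.cast_nonneg _)
    _ = 4 * weightedSqNorm ξ m := by
        rw [weightedSqNorm, mul_sum]
        refine sum_congr rfl fun z hz => ?_
        have := natCast_apply_pos_of_mem_support hz
        field_simp
        ring
    _ = 4 * convexDist ξ A ^ 2 := by rw [hd]
end
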